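/- arXiv:1008.1081 — 3 statements merged into one kernel-verified Lean document; each statement's English description precedes it below -/
import Mathlib

section
/- Let Ã ∈ M be closed and set W := the closure in H of {v_{ζ'} : v ∈ D(Ã*)}. If u ∈ D(Ã) and u_ζ = 0, then pr_W(A_max u) = 0. Consequently the set {(u_ζ, pr_W(A_max u)) : u ∈ D(Ã)} is the graph of a single-valued linear operator from {u_ζ : u ∈ D(Ã)} into W. -/
noncomputable section

open Filter Topology

namespace GrubbExt

variable {H : Type*} [NormedAddCommGroup H] [InnerProductSpace ℂ H] [CompleteSpace H]

/-- The inclusion of a closed subspace composed with the orthogonal projection onto it,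
as a continuous linear map `H →L[ℂ] H`.  This is `i_K ∘ pr_K` in the notation of the paper. -/
def projCl (K : Submodule ℂ H) (hK : IsClosed (K : Set H)) : H →L[ℂ] H :=
  haveI : CompleteSpace K := hK.completeSpace_coe
  K.subtypeL.comp K.orthogonalProjectionOnto

/-- `R` is the (everywhere defined, bounded) inverse of `P - lam`. -/
structure IsResolvent (P : H →ₗ.[ℂ] H) (lam : ℂ) (R : H →L[ℂ] H) : Prop where
  mem : ∀ f : H, R f ∈ P.domain
  left : ∀ u : P.domain, R (P u - lam • (u : H)) = u
  right : ∀ f : H, P ⟨R f, mem f⟩ - lam • R f = f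

/-- `E^λ := I + λ(A_γ - λ)^{-1}`, given the resolvent `R = (A_γ - λ)^{-1}`. -/
def Eop (lam : ℂ) (R : H →L[ℂ] H) : H →L[ℂ] H := ContinuousLinearMap.id ℂ H + lam • R

/-- `E'^{λ̄} := I + λ̄(A_γ^* - λ̄)^{-1}`, given the resolvent `R' = (A_γ^* - λ̄)^{-1}`. -/
def Eop' (lam : ℂ) (R' : H →L[ℂ] H) : H →L[ℂ] H :=
  ContinuousLinearMap.id ℂ H + (starRingEnd ℂ lam) • R'

/-- The resolvent set of a partially defined operator. -/
def resSet (P : H →ₗ.[ℂ] H) : Set ℂ := {lam | ∃ R : H →L[ℂ] H, IsResolvent P lam R}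

/-- The set of "Rayleigh quotients" `Re⟨Pu,u⟩` over unit vectors `u` in the domain of `P`;
the lower bound `m(P)` is the infimum of this set. -/
def raySet (P : H →ₗ.[ℂ] H) : Set ℝ :=
  {r | ∃ u : P.domain, ‖(u : H)‖ = 1 ∧ r = (inner ℂ (P u) (u : H) : ℂ).re}

/-- The abstract set-up of Grubb's extension theory: a dual pair `A_min, A'_min` of closed
densely defined operators in a Hilbert space `H`, together with a reference operator `A_γ`
lying between `A_min` and `A_max := (A'_min)*`, which is bijective with bounded inverse
(and whose adjoint is likewise bijective with bounded inverse). -/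
structure Setup (H : Type*) [NormedAddCommGroup H] [InnerProductSpace ℂ H]
    [CompleteSpace H] where
  Amin : H →ₗ.[ℂ] H
  Amin' : H →ₗ.[ℂ] H
  closed_Amin : IsClosed (Amin.graph : Set (H × H))
  closed_Amin' : IsClosed (Amin'.graph : Set (H × H))
  dense_Amin : Dense (Amin.domain : Set H)
  dense_Amin' : Dense (Amin'.domain : Set H)
  Amin_le_max : Amin ≤ Amin'.adjoint
  Amin'_le_max' : Amin' ≤ Amin.adjoint
  Agam : H →ₗ.[ℂ] H
  Amin_le_Agam : Amin ≤ Agam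
  Agam_le_max : Agam ≤ Amin'.adjoint
  Agaminv : H →L[ℂ] H
  Agaminv_mem : ∀ f : H, Agaminv f ∈ Agam.domain
  Agaminv_left : ∀ u : Agam.domain, Agaminv (Agam u) = u
  Agaminv_right : ∀ f : H, Agam ⟨Agaminv f, Agaminv_mem f⟩ = f
  Agamstarinv : H →L[ℂ] H
  Agamstarinv_mem : ∀ f : H, Agamstarinv f ∈ Agam.adjoint.domain
  Agamstarinv_left : ∀ v : Agam.adjoint.domain, Agamstarinv (Agam.adjoint v) = v
  Agamstarinv_right : ∀ f : H, Agam.adjoint ⟨Agamstarinv f, Agamstarinv_mem f⟩ = f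

namespace Setup

variable (S : Setup H)

/-- `A_max := (A'_min)*`. -/
def Amax : H →ₗ.[ℂ] H := S.Amin'.adjoint

/-- `A'_max := (A_min)*`. -/
def Amax' : H →ₗ.[ℂ] H := S.Amin.adjoint

/-- `u_ζ := u - A_γ^{-1} A_max u`, the nullspace component of `u ∈ D(A_max)`. -/
def uzeta (u : S.Amax.domain) : H := (u : H) - S.Agaminv (S.Amax u)

/-- `v_{ζ'} := v - (A_γ^*)^{-1} A'_max v`, the nullspace component of `v ∈ D(A'_max)`. -/
def vzeta (v : S.Amax'.domain) : H := (v : H) - S.Agamstarinv (S.Amax' v)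

/-- `Z := ker A_max`, as a submodule of `H`. -/
def Zker : Submodule ℂ H := (LinearMap.ker S.Amax.toFun).map S.Amax.domain.subtype

/-- `Z' := ker A'_max`, as a submodule of `H`. -/
def Zker' : Submodule ℂ H := (LinearMap.ker S.Amax'.toFun).map S.Amax'.domain.subtype

lemma coe_Zker :
    (S.Zker : Set H) = ⋂ v : S.Amin'.domain, {y : H | (inner ℂ y (S.Amin' v) : ℂ) = 0} := by
  ext y
  simp only [Set.mem_iInter, Set.mem_setOf_eq, SetLike.mem_coe, Zker, Submodule.mem_map,
    LinearMap.mem_ker]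
  constructor
  · rintro ⟨u, hu, rfl⟩ v
    have h := (LinearPMap.adjoint_isFormalAdjoint S.dense_Amin') u v
    have hu' : S.Amin'.adjoint u = 0 := hu
    rw [hu'] at h
    simpa using h.symm
  · intro h
    have hmem : y ∈ S.Amax.domain := by
      refine LinearPMap.mem_adjoint_domain_of_exists _ ⟨0, fun x => ?_⟩
      simp [h x]
    refine ⟨⟨y, hmem⟩, ?_, rfl⟩
    exact LinearPMap.adjoint_apply_eq S.dense_Amin' ⟨y, hmem⟩ fun x => by simp [h x]

lemma isClosed_Zker : IsClosed (S.Zker : Set H) := by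
  rw [S.coe_Zker]
  exact isClosed_iInter fun v =>
    isClosed_eq (Continuous.inner continuous_id continuous_const) continuous_const

lemma coe_Zker' :
    (S.Zker' : Set H) = ⋂ v : S.Amin.domain, {y : H | (inner ℂ y (S.Amin v) : ℂ) = 0} := by
  ext y
  simp only [Set.mem_iInter, Set.mem_setOf_eq, SetLike.mem_coe, Zker', Submodule.mem_map,
    LinearMap.mem_ker]
  constructor
  · rintro ⟨u, hu, rfl⟩ v
    have h := (LinearPMap.adjoint_isFormalAdjoint S.dense_Amin) u v
    have hu' : S.Amin.adjoint u = 0 := hu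
    rw [hu'] at h
    simpa using h.symm
  · intro h
    have hmem : y ∈ S.Amax'.domain := by
      refine LinearPMap.mem_adjoint_domain_of_exists _ ⟨0, fun x => ?_⟩
      simp [h x]
    refine ⟨⟨y, hmem⟩, ?_, rfl⟩
    exact LinearPMap.adjoint_apply_eq S.dense_Amin ⟨y, hmem⟩ fun x => by simp [h x]

lemma isClosed_Zker' : IsClosed (S.Zker' : Set H) := by
  rw [S.coe_Zker']
  exact isClosed_iInter fun v =>
    isClosed_eq (Continuous.inner continuous_id continuous_const) continuous_const

/-- The orthogonal projection onto `Z = ker A_max`. -/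
def projZ : H →L[ℂ] H := projCl S.Zker S.isClosed_Zker

/-- The orthogonal projection onto `Z' = ker A'_max`. -/
def projZ' : H →L[ℂ] H := projCl S.Zker' S.isClosed_Zker'

variable (At : H →ₗ.[ℂ] H)

/-- `D(T) = {u_ζ : u ∈ D(Ã)}`, the set of nullspace components of elements of `D(Ã)`. -/
def dzeta : Set H := {x | ∃ u : S.Amax.domain, (u : H) ∈ At.domain ∧ x = S.uzeta u}

/-- `{v_{ζ'} : v ∈ D(Ã*)}`. -/
def dzeta' : Set H := {x | ∃ v : S.Amax'.domain, (v : H) ∈ At.adjoint.domain ∧ x = S.vzeta v}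

/-- `V := closure {u_ζ : u ∈ D(Ã)}`. -/
def Vsub : Submodule ℂ H := (Submodule.span ℂ (S.dzeta At)).topologicalClosure

/-- `W := closure {v_{ζ'} : v ∈ D(Ã*)}`. -/
def Wsub : Submodule ℂ H := (Submodule.span ℂ (S.dzeta' At)).topologicalClosure

lemma isClosed_Vsub : IsClosed ((S.Vsub At : Set H)) :=
  Submodule.isClosed_topologicalClosure _

lemma isClosed_Wsub : IsClosed ((S.Wsub At : Set H)) :=
  Submodule.isClosed_topologicalClosure _

/-- The orthogonal projection onto `V`. -/
def projV : H →L[ℂ] H := projCl (S.Vsub At) (S.isClosed_Vsub At)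

/-- The orthogonal projection onto `W`. -/
def projW : H →L[ℂ] H := projCl (S.Wsub At) (S.isClosed_Wsub At)

/-- The set `{(u_ζ, pr_W (A_max u)) : u ∈ D(Ã)}`, for a general closed subspace `W`. -/
def TgraphOn (W : Submodule ℂ H) (hW : IsClosed (W : Set H)) : Set (H × H) :=
  {p | ∃ u : S.Amax.domain, (u : H) ∈ At.domain ∧ p.1 = S.uzeta u ∧
    p.2 = projCl W hW (S.Amax u)}

/-- The graph of the operator `T : V → W` corresponding to `Ã`. -/
def Tgraph : Set (H × H) := S.TgraphOn At (S.Wsub At) (S.isClosed_Wsub At)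


/-- `F^λ := I - λ A_γ^{-1}`. -/
def Fop (lam : ℂ) : H →L[ℂ] H := ContinuousLinearMap.id ℂ H - lam • S.Agaminv

/-- `F'^{λ̄} := I - λ̄ (A_γ^*)^{-1}`. -/
def Fop' (lam : ℂ) : H →L[ℂ] H := ContinuousLinearMap.id ℂ H - (starRingEnd ℂ lam) • S.Agamstarinv

/-- `Z_λ := ker(A_max - λ)`, as a subset of `H`. -/
def ZkerL (lam : ℂ) : Set H :=
  {x | ∃ hx : x ∈ S.Amax.domain, S.Amax ⟨x, hx⟩ = lam • x}

/-- `Z'_{λ̄} := ker(A'_max - λ̄)`, as a subset of `H`. -/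
def ZkerL' (lam : ℂ) : Set H :=
  {x | ∃ hx : x ∈ S.Amax'.domain, S.Amax' ⟨x, hx⟩ = (starRingEnd ℂ lam) • x}

/-- `pr^λ_ζ u := u - (A_γ - λ)^{-1}(A_max - λ)u`, given the resolvent `R = (A_γ - λ)^{-1}`. -/
def uzetaL (lam : ℂ) (R : H →L[ℂ] H) (u : S.Amax.domain) : H :=
  (u : H) - R (S.Amax u - lam • (u : H))

/-- `pr^{λ̄}_{ζ'} v := v - (A_γ^* - λ̄)^{-1}(A'_max - λ̄)v`,
given the resolvent `R' = (A_γ^* - λ̄)^{-1}`. -/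
def vzetaL (lam : ℂ) (R' : H →L[ℂ] H) (v : S.Amax'.domain) : H :=
  (v : H) - R' (S.Amax' v - (starRingEnd ℂ lam) • (v : H))

/-- `D(T^λ) = {pr^λ_ζ u : u ∈ D(Ã)}`. -/
def dzetaL (lam : ℂ) (R : H →L[ℂ] H) : Set H :=
  {x | ∃ u : S.Amax.domain, (u : H) ∈ At.domain ∧ x = S.uzetaL lam R u}

/-- `{pr^{λ̄}_{ζ'} v : v ∈ D(Ã*)}`. -/
def dzetaL' (lam : ℂ) (R' : H →L[ℂ] H) : Set H :=
  {x | ∃ v : S.Amax'.domain, (v : H) ∈ At.adjoint.domain ∧ x = S.vzetaL lam R' v}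

/-- `V_λ := closure {pr^λ_ζ u : u ∈ D(Ã)}`. -/
def VLsub (lam : ℂ) (R : H →L[ℂ] H) : Submodule ℂ H :=
  (Submodule.span ℂ (S.dzetaL At lam R)).topologicalClosure

/-- `W_{λ̄} := closure {pr^{λ̄}_{ζ'} v : v ∈ D(Ã*)}`. -/
def WLsub (lam : ℂ) (R' : H →L[ℂ] H) : Submodule ℂ H :=
  (Submodule.span ℂ (S.dzetaL' At lam R')).topologicalClosure

lemma isClosed_WLsub (lam : ℂ) (R' : H →L[ℂ] H) : IsClosed ((S.WLsub At lam R' : Set H)) :=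
  Submodule.isClosed_topologicalClosure _

/-- The orthogonal projection onto `W_{λ̄}`. -/
def projWL (lam : ℂ) (R' : H →L[ℂ] H) : H →L[ℂ] H :=
  projCl (S.WLsub At lam R') (S.isClosed_WLsub At lam R')

/-- The graph of the operator `T^λ : V_λ → W_{λ̄}` corresponding to `Ã - λ`:
`{(pr^λ_ζ u, pr_{W_{λ̄}}((A_max - λ)u)) : u ∈ D(Ã)}`. -/
def TgraphL (lam : ℂ) (R R' : H →L[ℂ] H) : Set (H × H) :=
  {p | ∃ u : S.Amax.domain, (u : H) ∈ At.domain ∧ p.1 = S.uzetaL lam R u ∧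
    p.2 = S.projWL At lam R' (S.Amax u - lam • (u : H))}

/-- `G^λ_{V,W} x := -pr_W (λ E^λ x)`, where `W = W(Ã)`. -/
def Gval (lam : ℂ) (R : H →L[ℂ] H) (x : H) : H :=
  -(S.projW At (lam • Eop lam R x))

/-- `G^μ_{Z,Z} z := -pr_Z (μ E^μ z)`. -/
def GZval (lam : ℂ) (R : H →L[ℂ] H) (x : H) : H :=
  -(S.projZ (lam • Eop lam R x))

lemma mem_Amax_res {lam : ℂ} {Rt : H →L[ℂ] H} (h2 : At ≤ S.Amax)
    (hRt : IsResolvent At lam Rt) (w : H) :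
    S.Agaminv w - Rt (w - lam • S.Agaminv w) ∈ S.Amax.domain :=
  Submodule.sub_mem _ (S.Agam_le_max.1 (S.Agaminv_mem w)) (h2.1 (hRt.mem _))

/-- `M(λ) w := pr_ζ ((I - (Ã - λ)^{-1}(A_max - λ)) A_γ^{-1} w)`, the value of the abstract
`M`-function on `w`. -/
def Mval {lam : ℂ} {Rt : H →L[ℂ] H} (h2 : At ≤ S.Amax) (hRt : IsResolvent At lam Rt)
    (w : H) : H :=
  S.uzeta ⟨S.Agaminv w - Rt (w - lam • S.Agaminv w), S.mem_Amax_res At h2 hRt w⟩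

end Setup

/-!
For `u ∈ D(Ã)` and `v ∈ D(Ã*)` one has the Green-type identity
`⟪A_max u, v_{ζ'}⟫ = ⟪u_ζ, A'_max v⟫`, because `Ã* ⊂ A'_max` and `(A_γ^{-1})* = (A_γ*)^{-1}`.
Hence `u_ζ = 0` forces `A_max u ⊥ W`. The set in question is the image of `D(Ã)` under the
linear map `u ↦ (u_ζ, pr_W (A_max u))`, a subspace of `H × H` in which first component `0`
forces second component `0`, i.e. the graph of a linear operator.
-/
theorem _root_.LinearPMap.adjoint_le_adjoint {𝕜 E F : Type*} [RCLike 𝕜] [NormedAddCommGroup E]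
    [InnerProductSpace 𝕜 E] [CompleteSpace E] [NormedAddCommGroup F] [InnerProductSpace 𝕜 F]
    {T T' : E →ₗ.[𝕜] F} (hT : Dense (T.domain : Set E)) (h : T ≤ T') :
    T'.adjoint ≤ T.adjoint :=
  LinearPMap.IsFormalAdjoint.le_adjoint hT fun x y => by
    rw [h.2 (y := ⟨x, h.1 x.2⟩) rfl]
    exact (LinearPMap.adjoint_isFormalAdjoint (hT.mono h.1)).symm _ y

theorem _root_.Submodule.mem_orthogonal_topologicalClosure_span {𝕜 E : Type*} [RCLike 𝕜]
    [NormedAddCommGroup E] [InnerProductSpace 𝕜 E] {s : Set E} {x : E}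
    (h : ∀ y ∈ s, inner 𝕜 y x = 0) : x ∈ (Submodule.span 𝕜 s).topologicalClosureᗮ := by
  rw [Submodule.orthogonal_closure, Submodule.mem_orthogonal]
  intro y hy
  induction hy using Submodule.span_induction with
  | mem y hy => exact h y hy
  | zero => exact inner_zero_left x
  | add y z _ _ hy hz => rw [inner_add_left, hy, hz, add_zero]
  | smul c y _ hy => rw [inner_smul_left, hy, mul_zero]

lemma projCl_mem (K : Submodule ℂ H) (hK : IsClosed (K : Set H)) (f : H) :
    projCl K hK f ∈ K := by
  have : CompleteSpace K := hK.completeSpace_coe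
  exact (K.orthogonalProjectionOnto f).2

lemma projCl_eq_zero_of_mem_orthogonal {K : Submodule ℂ H} (hK : IsClosed (K : Set H)) {f : H}
    (hf : f ∈ Kᗮ) : projCl K hK f = 0 := by
  have : CompleteSpace K := hK.completeSpace_coe
  simp [projCl, Submodule.orthogonalProjectionOnto_eq_zero_iff.mpr hf]

namespace Setup

variable (S : Setup H) {At : H →ₗ.[ℂ] H}

lemma inner_Agaminv (f g : H) :
    inner ℂ (S.Agaminv f) g = inner ℂ f (S.Agamstarinv g) := by
  have hdense : Dense (S.Agam.domain : Set H) := S.dense_Amin.mono S.Amin_le_Agam.1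
  have h := (LinearPMap.adjoint_isFormalAdjoint hdense).symm
    ⟨S.Agaminv f, S.Agaminv_mem f⟩ ⟨S.Agamstarinv g, S.Agamstarinv_mem g⟩
  rw [S.Agaminv_right, S.Agamstarinv_right] at h
  exact h.symm

lemma inner_Amax_eq_inner_Amax' (h1 : S.Amin ≤ At) (h2 : At ≤ S.Amax)
    {u : S.Amax.domain} (hu : (u : H) ∈ At.domain)
    {v : S.Amax'.domain} (hv : (v : H) ∈ At.adjoint.domain) :
    inner ℂ (S.Amax u) (v : H) = inner ℂ (u : H) (S.Amax' v) := by
  have hdense : Dense (At.domain : Set H) := S.dense_Amin.mono h1.1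
  have hAv : At.adjoint ⟨v, hv⟩ = S.Amax' v :=
    (LinearPMap.adjoint_le_adjoint S.dense_Amin h1).2 rfl
  rw [← h2.2 (x := ⟨u, hu⟩) rfl, ← hAv]
  exact (LinearPMap.adjoint_isFormalAdjoint hdense).symm ⟨u, hu⟩ ⟨v, hv⟩

lemma inner_Amax_vzeta (h1 : S.Amin ≤ At) (h2 : At ≤ S.Amax)
    {u : S.Amax.domain} (hu : (u : H) ∈ At.domain)
    {v : S.Amax'.domain} (hv : (v : H) ∈ At.adjoint.domain) :
    inner ℂ (S.Amax u) (S.vzeta v) = inner ℂ (S.uzeta u) (S.Amax' v) := by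
  rw [vzeta, uzeta, inner_sub_right, inner_sub_left, S.inner_Agaminv,
    S.inner_Amax_eq_inner_Amax' h1 h2 hu hv]

lemma projW_Amax_eq_zero (h1 : S.Amin ≤ At) (h2 : At ≤ S.Amax)
    {u : S.Amax.domain} (hu : (u : H) ∈ At.domain) (hζ : S.uzeta u = 0) :
    S.projW At (S.Amax u) = 0 := by
  refine projCl_eq_zero_of_mem_orthogonal _
    (Submodule.mem_orthogonal_topologicalClosure_span ?_)
  rintro _ ⟨v, hv, rfl⟩
  rw [inner_eq_zero_symm, S.inner_Amax_vzeta h1 h2 hu hv, hζ, inner_zero_left]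

variable (At)

def TgraphSubmodule : Submodule ℂ (H × H) :=
  (At.domain.comap S.Amax.domain.subtype).map
    ((S.Amax.domain.subtype - S.Agaminv.toLinearMap ∘ₗ S.Amax.toFun).prod
      ((S.projW At).toLinearMap ∘ₗ S.Amax.toFun))

lemma coe_TgraphSubmodule : (S.TgraphSubmodule At : Set (H × H)) = S.Tgraph At := by
  ext ⟨x, y⟩
  simp [TgraphSubmodule, Tgraph, TgraphOn, uzeta, projW, eq_comm]

lemma snd_eq_zero_of_mem_TgraphSubmodule (h1 : S.Amin ≤ At) (h2 : At ≤ S.Amax)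
    (p : H × H) (hp : p ∈ S.TgraphSubmodule At) (hp1 : p.1 = 0) : p.2 = 0 := by
  rw [← SetLike.mem_coe, coe_TgraphSubmodule] at hp
  obtain ⟨u, hu, hζ, hW⟩ := hp
  rw [hW]
  exact S.projW_Amax_eq_zero h1 h2 hu (hζ ▸ hp1)

lemma coe_map_fst_TgraphSubmodule :
    ((S.TgraphSubmodule At).map (LinearMap.fst ℂ H H) : Set H) = S.dzeta At := by
  ext x
  simp [TgraphSubmodule, dzeta, uzeta, eq_comm]

lemma snd_mem_Wsub_of_mem_Tgraph {p : H × H} (hp : p ∈ S.Tgraph At) : p.2 ∈ S.Wsub At := by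
  obtain ⟨u, -, -, hW⟩ := hp
  rw [hW]
  exact projCl_mem _ _ _

end Setup

theorem statement_2_general (S : Setup H) (At : H →ₗ.[ℂ] H)
    (h1 : S.Amin ≤ At) (h2 : At ≤ S.Amax) :
    (∀ u : S.Amax.domain, (u : H) ∈ At.domain → S.uzeta u = 0 →
      S.projW At (S.Amax u) = 0) ∧
    ∃ T : H →ₗ.[ℂ] H, (T.graph : Set (H × H)) = S.Tgraph At ∧
      (T.domain : Set H) = S.dzeta At ∧ ∀ x : T.domain, T x ∈ S.Wsub At := by
  have hsingle := S.snd_eq_zero_of_mem_TgraphSubmodule At h1 h2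
  refine ⟨fun u hu hζ => S.projW_Amax_eq_zero h1 h2 hu hζ, (S.TgraphSubmodule At).toLinearPMap,
    ?_, S.coe_map_fst_TgraphSubmodule At,
    fun x => S.snd_mem_Wsub_of_mem_Tgraph At (p := (x, _)) ?_⟩
  · rw [Submodule.toLinearPMap_graph_eq _ hsingle, S.coe_TgraphSubmodule]
  · rw [← S.coe_TgraphSubmodule]
    exact Submodule.mem_graph_toLinearPMap hsingle x

theorem statement_2 (S : Setup H) (At : H →ₗ.[ℂ] H)
    (h1 : S.Amin ≤ At) (h2 : At ≤ S.Amax)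
    (hcl : IsClosed (At.graph : Set (H × H))) :
    (∀ u : S.Amax.domain, (u : H) ∈ At.domain → S.uzeta u = 0 →
      S.projW At (S.Amax u) = 0) ∧
    ∃ T : H →ₗ.[ℂ] H, (T.graph : Set (H × H)) = S.Tgraph At ∧
      (T.domain : Set H) = S.dzeta At ∧ ∀ x : T.domain, T x ∈ S.Wsub At :=
  statement_2_general S At h1 h2

end GrubbExt
end
end

section
/- (Theorem 5.1, inverse formula.) Let Ã ∈ M be closed, corresponding to T : V → W. Then Ã : D(Ã) → H is bijective if and only if T : D(T) → W is bijective, and in that case Ã^{-1} = A_γ^{-1} + i_V ∘ T^{-1} ∘ pr_W as operators on H. -/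
noncomputable section

open Filter Topology

namespace GrubbExt

variable {H : Type*} [NormedAddCommGroup H] [InnerProductSpace ℂ H] [CompleteSpace H]

/-!
`T` is `Ã` seen through the map `u ↦ (u - A_γ⁻¹ Ã u, pr_W Ã u)`, so the only information lost
is the component of `Ã u` orthogonal to `W`. That component can always be produced inside
`D(Ã)`: if `g ⊥ W` then `⟪Ã* v, A_γ⁻¹ g⟫ = ⟪(A_γ*)⁻¹ Ã* v, g⟫ = ⟪v, g⟫`, because
`v - (A_γ*)⁻¹ Ã* v = v_ζ'` lies in `W`, so `(A_γ⁻¹ g, g)` lies in the graph of `Ã** = Ã`.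
Hence injectivity and surjectivity of `Ã` and of `T : D(T) → W` are equivalent, and reading
`u = A_γ⁻¹ f + u_ζ` with `T u_ζ = pr_W f` gives the inverse formula.
-/

section DoubleAdjoint

variable {𝕜 E F : Type*} [RCLike 𝕜] [NormedAddCommGroup E] [InnerProductSpace 𝕜 E]
  [NormedAddCommGroup F] [InnerProductSpace 𝕜 F] [CompleteSpace E] [CompleteSpace F]

/-- `P** ⊆ P` for closed `P`: the graph is its own double orthogonal complement in `E ⊕₂ F`. -/
theorem _root_.LinearPMap.mem_graph_of_forall_adjoint {P : E →ₗ.[𝕜] F}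
    (hd : Dense (P.domain : Set E)) (hcl : P.IsClosed) {a : E} {b : F}
    (h : ∀ v : P.adjoint.domain, inner 𝕜 (P.adjoint v) a = inner 𝕜 (v : F) b) :
    (a, b) ∈ P.graph := by
  let Γ : Submodule 𝕜 (WithLp 2 (E × F)) :=
    P.graph.comap (WithLp.linearEquiv 2 𝕜 (E × F)).toLinearMap
  have hΓ : IsClosed (Γ : Set (WithLp 2 (E × F))) :=
    hcl.preimage (WithLp.prod_continuous_ofLp 2 E F)
  suffices WithLp.toLp 2 (a, b) ∈ Γᗮᗮ by
    rwa [Γ.orthogonal_orthogonal_eq_closure, hΓ.submodule_topologicalClosure_eq] at this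
  intro u hu
  have hu_adj : (u.snd, -u.fst) ∈ P.adjoint.graph := by
    rw [LinearPMap.adjoint_graph_eq_graph_adjoint hd, Submodule.mem_adjoint_iff]
    intro x y hxy
    have : inner 𝕜 x u.fst + inner 𝕜 y u.snd = 0 := hu (WithLp.toLp 2 (x, y)) hxy
    rw [inner_neg_right]
    linear_combination this
  obtain ⟨v, hv, hPv⟩ := P.adjoint.mem_graph_iff.1 hu_adj
  have := h v
  rw [hPv, hv, inner_neg_left] at this
  change inner 𝕜 u.fst a + inner 𝕜 u.snd b = 0
  linear_combination -this

end DoubleAdjoint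

section Correspondence

variable {𝕜 E : Type*} [RCLike 𝕜] [NormedAddCommGroup E] [InnerProductSpace 𝕜 E]

/-- With `G = A_γ⁻¹` and `W = W(Ã)` this says that `T` is the operator `T : V → W`
corresponding to `A = Ã`. -/
def Corresponds (A T : E →ₗ.[𝕜] E) (G : E →L[𝕜] E) (W : Submodule 𝕜 E)
    [W.HasOrthogonalProjection] : Prop :=
  ∀ p : E × E, p ∈ T.graph ↔ ∃ u : A.domain, ((u : E) - G (A u), W.starProjection (A u)) = p

namespace Corresponds

variable {A T : E →ₗ.[𝕜] E} {G : E →L[𝕜] E} {W : Submodule 𝕜 E} [W.HasOrthogonalProjection]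

theorem exists_image (hAT : Corresponds A T G W) (u : A.domain) :
    ∃ x : T.domain, (x : E) = u - G (A u) ∧ T x = W.starProjection (A u) :=
  T.mem_graph_iff.1 ((hAT _).2 ⟨u, rfl⟩)

theorem exists_preimage (hAT : Corresponds A T G W) (x : T.domain) :
    ∃ u : A.domain, (x : E) = u - G (A u) ∧ T x = W.starProjection (A u) := by
  obtain ⟨u, hu⟩ := (hAT _).1 (T.mem_graph x)
  exact ⟨u, (congr_arg Prod.fst hu).symm, (congr_arg Prod.snd hu).symm⟩

theorem range_subset (hAT : Corresponds A T G W) : Set.range T ⊆ W := by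
  rintro _ ⟨x, rfl⟩
  obtain ⟨u, -, hTx⟩ := hAT.exists_preimage x
  exact hTx ▸ W.starProjection_apply_mem _

theorem eq_add_of_apply_eq (hAT : Corresponds A T G W) (hT : Function.Injective T) {f x : E}
    (hx : (x, W.starProjection f) ∈ T.graph) {u : A.domain} (hu : A u = f) :
    (u : E) = G f + x := by
  obtain ⟨y, hy : (y : E) = x, hTy : T y = W.starProjection f⟩ := T.mem_graph_iff.1 hx
  obtain ⟨z, hz, hTz⟩ := hAT.exists_image u
  rw [hu] at hz hTz
  obtain rfl : y = z := hT (hTy.trans hTz.symm)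
  rw [← hy, hz]
  abel

variable (hG : ∀ g ∈ Wᗮ, (G g, g) ∈ A.graph)
include hG

theorem injective_iff (hAT : Corresponds A T G W) :
    Function.Injective T ↔ Function.Injective A := by
  constructor
  · refine fun hT => (injective_iff_map_eq_zero A.toFun).2 fun u (hu : A u = 0) => ?_
    obtain ⟨x, hx, hTx⟩ := hAT.exists_image u
    rw [hu, map_zero, sub_zero] at hx
    rw [hu, map_zero] at hTx
    obtain rfl : x = 0 := (injective_iff_map_eq_zero T.toFun).1 hT x hTx
    exact Subtype.ext hx.symm
  · refine fun hA => (injective_iff_map_eq_zero T.toFun).2 fun x (hx : T x = 0) => ?_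
    obtain ⟨u, hxu, hTx⟩ := hAT.exists_preimage x
    obtain ⟨m, hm, hAm⟩ := A.mem_graph_iff.1
      (hG _ (W.starProjection_apply_eq_zero_iff.1 (hTx ▸ hx)))
    obtain rfl : m = u := hA hAm
    exact Subtype.ext (hxu.trans (sub_eq_zero.2 hm))

theorem surjective_iff (hAT : Corresponds A T G W) :
    Function.Surjective A ↔ (W : Set E) ⊆ Set.range T := by
  constructor
  · intro hA w hw
    obtain ⟨u, rfl⟩ := hA w
    obtain ⟨x, -, hTx⟩ := hAT.exists_image u
    exact ⟨x, hTx.trans (Submodule.starProjection_eq_self_iff.2 hw)⟩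
  · intro hW f
    obtain ⟨x, hx⟩ := hW (W.starProjection_apply_mem f)
    obtain ⟨u, -, hTx⟩ := hAT.exists_preimage x
    have hperp : f - A u ∈ Wᗮ :=
      W.starProjection_apply_eq_zero_iff.1 (by rw [map_sub, ← hx, hTx, sub_self])
    obtain ⟨m, -, hAm : A m = f - A u⟩ := A.mem_graph_iff.1 (hG _ hperp)
    exact ⟨u + m, by rw [A.map_add, hAm, add_sub_cancel]⟩

theorem bijective_iff (hAT : Corresponds A T G W) :
    Function.Bijective A ↔ Function.Injective T ∧ Set.range T = W := by
  rw [Function.Bijective, hAT.injective_iff hG, hAT.surjective_iff hG, Set.Subset.antisymm_iff,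
    and_iff_right hAT.range_subset]

end Corresponds

end Correspondence

namespace Setup

variable (S : Setup H) {At : H →ₗ.[ℂ] H}

instance (At : H →ₗ.[ℂ] H) : (S.Wsub At).HasOrthogonalProjection :=
  haveI := (S.isClosed_Wsub At).completeSpace_coe
  inferInstance

theorem inner_Agaminv_eq (p g : H) :
    inner ℂ p (S.Agaminv g) = inner ℂ (S.Agamstarinv p) g := by
  have hd : Dense (S.Agam.domain : Set H) := S.dense_Amin.mono S.Amin_le_Agam.1
  have h := LinearPMap.adjoint_isFormalAdjoint hd
    ⟨S.Agamstarinv p, S.Agamstarinv_mem p⟩ ⟨S.Agaminv g, S.Agaminv_mem g⟩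
  rwa [S.Agamstarinv_right, S.Agaminv_right] at h

variable {S}

theorem dense_domain_of_Amin_le (h1 : S.Amin ≤ At) : Dense (At.domain : Set H) :=
  S.dense_Amin.mono h1.1

theorem adjoint_le_Amax' (h1 : S.Amin ≤ At) : At.adjoint ≤ S.Amax' :=
  LinearPMap.IsFormalAdjoint.le_adjoint S.dense_Amin fun x y => by
    rw [h1.2 (y := ⟨x, h1.1 x.2⟩) rfl]
    exact (LinearPMap.adjoint_isFormalAdjoint (dense_domain_of_Amin_le h1)).symm _ y

theorem sub_Agamstarinv_mem_Wsub (h1 : S.Amin ≤ At) (v : At.adjoint.domain) :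
    (v : H) - S.Agamstarinv (At.adjoint v) ∈ S.Wsub At := by
  have hv : (v : H) ∈ S.Amax'.domain := (adjoint_le_Amax' h1).1 v.2
  refine Submodule.le_topologicalClosure _ (Submodule.subset_span ⟨⟨v, hv⟩, v.2, ?_⟩)
  rw [vzeta, ← (adjoint_le_Amax' h1).2 rfl]

theorem Agaminv_mem_graph (h1 : S.Amin ≤ At) (hcl : At.IsClosed) {g : H}
    (hg : g ∈ (S.Wsub At)ᗮ) : (S.Agaminv g, g) ∈ At.graph := by
  refine LinearPMap.mem_graph_of_forall_adjoint (dense_domain_of_Amin_le h1) hcl fun v => ?_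
  have h := (Submodule.mem_orthogonal _ _).1 hg _ (sub_Agamstarinv_mem_Wsub h1 v)
  rw [inner_sub_left, sub_eq_zero] at h
  rw [S.inner_Agaminv_eq, h]

theorem corresponds (h2 : At ≤ S.Amax) {T : H →ₗ.[ℂ] H}
    (hT : (T.graph : Set (H × H)) = S.Tgraph At) :
    Corresponds At T S.Agaminv (S.Wsub At) := by
  have hAmax (u : At.domain) : S.Amax ⟨u, h2.1 u.2⟩ = At u := (h2.2 rfl).symm
  rintro ⟨x, y⟩
  rw [← SetLike.mem_coe, hT]
  constructor
  · rintro ⟨u, hu, rfl, rfl⟩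
    exact ⟨⟨u, hu⟩, by rw [← hAmax]; rfl⟩
  · rintro ⟨u, hu⟩
    exact ⟨⟨u, h2.1 u.2⟩, u.2, by rw [← hu, uzeta, hAmax], by rw [← hu, hAmax]; rfl⟩

end Setup

theorem statement_7 (S : Setup H) (At : H →ₗ.[ℂ] H)
    (h1 : S.Amin ≤ At) (h2 : At ≤ S.Amax)
    (hcl : IsClosed (At.graph : Set (H × H)))
    (T : H →ₗ.[ℂ] H) (hT : (T.graph : Set (H × H)) = S.Tgraph At) :
    ((∀ f : H, ∃! u : At.domain, At u = f) ↔
      (Function.Injective fun x : T.domain => T x) ∧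
        Set.range (fun x : T.domain => T x) = (S.Wsub At : Set H)) ∧
    ((∀ f : H, ∃! u : At.domain, At u = f) →
      ∀ f x : H, (x, S.projW At f) ∈ T.graph →
        ∀ u : At.domain, At u = f → (u : H) = S.Agaminv f + x) := by
  have hAT := Setup.corresponds h2 hT
  have hG := fun g (hg : g ∈ (S.Wsub At)ᗮ) => Setup.Agaminv_mem_graph h1 hcl hg
  simp only [← Function.bijective_iff_existsUnique]
  exact ⟨hAT.bijective_iff hG,
    fun hA f x hx u hu => hAT.eq_add_of_apply_eq ((hAT.bijective_iff hG).1 hA).1 hx hu⟩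

end GrubbExt
end
end

section
/- (Theorem 8.1, 1°.) In the symmetric setup, let Ã ∈ M be closed, corresponding to T : V → W, with D(T) ≠ {0}. If V ⊂ W and m(T) > −m(A_γ), then m(Ã) ≥ m(T)·m(A_γ)/(m(T) + m(A_γ)); in particular Ã is lower bounded. -/
noncomputable section

open Filter Topology

namespace GrubbExt

variable {H : Type*} [NormedAddCommGroup H] [InnerProductSpace ℂ H] [CompleteSpace H]

/-! Split `u ∈ D(Ã)` as `u = u_γ + u_ζ` with `u_γ = A_γ⁻¹ A_max u`. Then
`Re⟨Ãu, u⟩ = Re⟨A_γ u_γ, u_γ⟩ + Re⟨A_max u, u_ζ⟩`, and since `u_ζ ∈ V ⊂ W` the second term is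
`Re⟨T u_ζ, u_ζ⟩`. Hence `Re⟨Ãu, u⟩ ≥ m(A_γ)‖u_γ‖² + m(T)‖u_ζ‖²`, and minimising the right-hand
side over `‖u_γ + u_ζ‖ = 1` gives `m(T) m(A_γ) / (m(T) + m(A_γ))`. -/

lemma mul_norm_sq_le_re_inner_of_isGLB_raySet {E : Type*} [NormedAddCommGroup E]
    [InnerProductSpace ℂ E] {P : E →ₗ.[ℂ] E} {m : ℝ} (hm : IsGLB (raySet P) m) (w : P.domain) :
    m * ‖(w : E)‖ ^ 2 ≤ (inner ℂ (P w) (w : E) : ℂ).re := by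
  rcases eq_or_ne (w : E) 0 with hw | hw
  · simp [hw]
  set n : ℝ := ‖(w : E)‖
  have hn : 0 < n := norm_pos_iff.mpr hw
  have hunit : ‖((((n⁻¹ : ℝ) : ℂ) • w : P.domain) : E)‖ = 1 := by
    rw [Submodule.coe_smul, norm_smul, Complex.norm_real, Real.norm_eq_abs,
      abs_of_pos (inv_pos.mpr hn), inv_mul_cancel₀ hn.ne']
  have hscaled : (inner ℂ (P (((n⁻¹ : ℝ) : ℂ) • w)) ((((n⁻¹ : ℝ) : ℂ) • w : P.domain) : E)
      : ℂ).re = n⁻¹ ^ 2 * (inner ℂ (P w) (w : E) : ℂ).re := by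
    rw [P.map_smul, Submodule.coe_smul, inner_smul_left, inner_smul_right, Complex.conj_ofReal,
      ← mul_assoc, ← Complex.ofReal_mul, Complex.re_ofReal_mul, sq]
  have hle := hm.1 ⟨_, hunit, rfl⟩
  rw [hscaled] at hle
  calc m * n ^ 2 ≤ n⁻¹ ^ 2 * (inner ℂ (P w) (w : E) : ℂ).re * n ^ 2 := by gcongr
    _ = (inner ℂ (P w) (w : E) : ℂ).re := by field_simp

lemma inner_projCl_left_of_mem (K : Submodule ℂ H) (hK : IsClosed (K : Set H)) (f : H)
    {z : H} (hz : z ∈ K) : inner ℂ (projCl K hK f) z = inner ℂ f z := by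
  have : CompleteSpace K := hK.completeSpace_coe
  exact Submodule.inner_orthogonalProjectionOnto_eq_of_mem_right (⟨z, hz⟩ : K) f

/-- The right-hand side is minimised on `a + b = 1` when `mT ≥ 0` and on `b = 1 + a` when
`mT < 0`; in both cases the minimum `mT * mg / (mT + mg)` is attained at `a = |mT| / (mT + mg)`. -/
lemma mul_div_add_le_mul_sq_add_mul_sq {mT mg a b : ℝ} (ha : 0 ≤ a) (hb : 0 ≤ b)
    (hab : 1 ≤ a + b) (hba : b ≤ 1 + a) (hmg : 0 < mg) (hsum : 0 < mT + mg) :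
    mT * mg / (mT + mg) ≤ mg * a ^ 2 + mT * b ^ 2 := by
  rw [div_le_iff₀ hsum]
  rcases le_or_gt 0 mT with hmT | hmT
  · have : 0 ≤ mT * mg * ((a + b) ^ 2 - 1) :=
      mul_nonneg (mul_nonneg hmT hmg.le) (by nlinarith)
    nlinarith [sq_nonneg (mg * a - mT * b)]
  · have : 0 ≤ (mT + mg) * -mT * ((1 + a) ^ 2 - b ^ 2) :=
      mul_nonneg (mul_nonneg hsum.le (neg_nonneg.mpr hmT.le)) (by nlinarith)
    nlinarith [sq_nonneg ((mT + mg) * a + mT)]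

lemma mul_div_add_le_of_norm_add_eq_one {E : Type*} [SeminormedAddCommGroup E] {x y : E}
    (hxy : ‖x + y‖ = 1) {mT mg : ℝ} (hmg : 0 < mg) (hsum : 0 < mT + mg) :
    mT * mg / (mT + mg) ≤ mg * ‖x‖ ^ 2 + mT * ‖y‖ ^ 2 := by
  refine mul_div_add_le_mul_sq_add_mul_sq (norm_nonneg x) (norm_nonneg y) ?_ ?_ hmg hsum
  · exact hxy ▸ norm_add_le x y
  · calc ‖y‖ = ‖(x + y) - x‖ := by rw [add_sub_cancel_left]
      _ ≤ ‖x + y‖ + ‖x‖ := norm_sub_le _ _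
      _ = 1 + ‖x‖ := by rw [hxy]

namespace Setup

variable (S : Setup H)

lemma Agaminv_add_uzeta (u : S.Amax.domain) : S.Agaminv (S.Amax u) + S.uzeta u = u :=
  add_sub_cancel _ _

lemma mul_norm_sq_Agaminv_le {mg : ℝ} (hmg : IsGLB (raySet S.Agam) mg) (f : H) :
    mg * ‖S.Agaminv f‖ ^ 2 ≤ (inner ℂ f (S.Agaminv f) : ℂ).re := by
  simpa only [S.Agaminv_right] using
    mul_norm_sq_le_re_inner_of_isGLB_raySet hmg ⟨S.Agaminv f, S.Agaminv_mem f⟩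

variable {At : H →ₗ.[ℂ] H}

lemma uzeta_mem_Vsub {u : S.Amax.domain} (hu : (u : H) ∈ At.domain) :
    S.uzeta u ∈ S.Vsub At :=
  Submodule.le_topologicalClosure _ (Submodule.subset_span ⟨u, hu, rfl⟩)

/-- For `u_ζ ∈ W` the projection `pr_W` in `T u_ζ = pr_W (A_max u)` is invisible in the
form `⟨T u_ζ, u_ζ⟩`. -/
lemma mul_norm_sq_uzeta_le {T : H →ₗ.[ℂ] H} (hT : (T.graph : Set (H × H)) = S.Tgraph At)
    (hVW : S.Vsub At ≤ S.Wsub At) {mT : ℝ} (hmT : IsGLB (raySet T) mT)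
    {u : S.Amax.domain} (hu : (u : H) ∈ At.domain) :
    mT * ‖S.uzeta u‖ ^ 2 ≤ (inner ℂ (S.Amax u) (S.uzeta u) : ℂ).re := by
  have hgraph : (S.uzeta u, S.projW At (S.Amax u)) ∈ T.graph := by
    change _ ∈ (T.graph : Set (H × H))
    rw [hT]
    exact ⟨u, hu, rfl, rfl⟩
  obtain ⟨t, ht, hTt⟩ := T.mem_graph_iff.mp hgraph
  have hform := mul_norm_sq_le_re_inner_of_isGLB_raySet hmT t
  rwa [show (t : H) = S.uzeta u from ht, show T t = S.projW At (S.Amax u) from hTt, projW,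
    inner_projCl_left_of_mem _ _ _ (hVW (S.uzeta_mem_Vsub hu))] at hform

end Setup

theorem statement_16_general (S : Setup H)
    (At : H →ₗ.[ℂ] H)
    (h2 : At ≤ S.Amax)
    (T : H →ₗ.[ℂ] H) (hT : (T.graph : Set (H × H)) = S.Tgraph At)
    (hVW : S.Vsub At ≤ S.Wsub At)
    (mT mg : ℝ) (hmT : IsGLB (raySet T) mT) (hmg : IsGLB (raySet S.Agam) mg)
    (hgpos : 0 < mg) (hgt : -mg < mT) :
    (∀ r ∈ raySet At, mT * mg / (mT + mg) ≤ r) ∧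
    ∃ c : ℝ, ∀ r ∈ raySet At, c ≤ r := by
  have hbound : ∀ r ∈ raySet At, mT * mg / (mT + mg) ≤ r := by
    rintro r ⟨u, hnorm, rfl⟩
    set U : S.Amax.domain := ⟨u, h2.1 u.2⟩
    have hAt : At u = S.Amax U := h2.2 rfl
    have hsplit : (inner ℂ (At u) (u : H) : ℂ).re =
        (inner ℂ (S.Amax U) (S.Agaminv (S.Amax U)) : ℂ).re +
          (inner ℂ (S.Amax U) (S.uzeta U) : ℂ).re := by
      rw [← Complex.add_re, ← inner_add_right, S.Agaminv_add_uzeta, hAt]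
    rw [← S.Agaminv_add_uzeta U] at hnorm
    calc mT * mg / (mT + mg)
        ≤ mg * ‖S.Agaminv (S.Amax U)‖ ^ 2 + mT * ‖S.uzeta U‖ ^ 2 :=
          mul_div_add_le_of_norm_add_eq_one hnorm hgpos (by linarith)
      _ ≤ _ := add_le_add (S.mul_norm_sq_Agaminv_le hmg _)
          (S.mul_norm_sq_uzeta_le hT hVW hmT u.2)
      _ = _ := hsplit.symm
  exact ⟨hbound, _, hbound⟩

theorem statement_16 (S : Setup H) (hsym : S.Amin' = S.Amin) (hsa : S.Agam.adjoint = S.Agam)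
    (At : H →ₗ.[ℂ] H)
    (h1 : S.Amin ≤ At) (h2 : At ≤ S.Amax)
    (hcl : IsClosed (At.graph : Set (H × H)))
    (T : H →ₗ.[ℂ] H) (hT : (T.graph : Set (H × H)) = S.Tgraph At)
    (hD : ∃ x : T.domain, (x : H) ≠ 0)
    (hVW : S.Vsub At ≤ S.Wsub At)
    (mT mg : ℝ) (hmT : IsGLB (raySet T) mT) (hmg : IsGLB (raySet S.Agam) mg)
    (hgpos : 0 < mg) (hgt : -mg < mT) :
    (∀ r ∈ raySet At, mT * mg / (mT + mg) ≤ r) ∧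
    ∃ c : ℝ, ∀ r ∈ raySet At, c ≤ r :=
  statement_16_general S At h2 T hT hVW mT mg hmT hmg hgpos hgt

end GrubbExt
end
end
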